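/- Let A ∈ ℝ^{n×n}, B^m ∈ ℝ^{n×m}, B^p ∈ ℝ^{n×r}, C ∈ ℝ^{p×n}, and let U ∈ ℝ^{m×N}, W ∈ ℝ^{r×N}, X ∈ ℝ^{n×N} be data matrices such that [U; W; X] has full row rank m + r + n. Define Ẋ := A X + B^m U + B^p W and Ẏ := C Ẋ. Then rank([U; Ẏ; X]) = m + n + rank(C B^p) and rank([U; X; Ẋ]) = m + n + rank(B^p). -/

import Mathlib

open Matrix

/-!
Let `D = [U; W; X]`. Since `D` has full row rank, right multiplication by `D` preserves rank, and
both stacked data matrices are of the form `M * D` for a block matrix `M` assembled from `A`, `Bᵐ`,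
`Bᵖ`, `C` and identity blocks. Eliminating against the identity blocks brings `M` to block-diagonal
form `diag(1, C Bᵖ, 1)`, respectively, after swapping two column blocks, `diag(1, 1, Bᵖ)`.
-/

theorem Submodule.finrank_prod {K M N : Type*} [DivisionRing K] [AddCommGroup M] [AddCommGroup N]
    [Module K M] [Module K N] [FiniteDimensional K M] [FiniteDimensional K N]
    (p : Submodule K M) (q : Submodule K N) :
    Module.finrank K (p.prod q) = Module.finrank K p + Module.finrank K q := by
  rw [← Module.finrank_prod, ← LinearMap.finrank_range_of_inj (f := p.subtype.prodMap q.subtype)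
    (Prod.map_injective.2 ⟨p.injective_subtype, q.injective_subtype⟩), LinearMap.range_prodMap,
    Submodule.range_subtype, Submodule.range_subtype]

namespace Matrix

theorem fromRows_add {R m₁ m₂ n : Type*} [Add R] (A₁ B₁ : Matrix m₁ n R) (A₂ B₂ : Matrix m₂ n R) :
    fromRows A₁ A₂ + fromRows B₁ B₂ = fromRows (A₁ + B₁) (A₂ + B₂) := by
  ext (i | i) j <;> rfl

variable {K : Type*} [Field K] {l m n o : Type*} [Fintype l] [Fintype m] [Fintype n] [Fintype o]

theorem rank_fromBlocks_zero_zero (A : Matrix m n K) (D : Matrix l o K) :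
    (fromBlocks A 0 0 D).rank = A.rank + D.rank := by
  have hmulVecLin : (fromBlocks A 0 0 D).mulVecLin =
      (LinearEquiv.sumArrowLequivProdArrow m l K K).symm.toLinearMap ∘ₗ
        (A.mulVecLin.prodMap D.mulVecLin) ∘ₗ
          (LinearEquiv.sumArrowLequivProdArrow n o K K).toLinearMap := by
    ext v i
    cases i <;> simp [fromBlocks_mulVec, LinearEquiv.sumArrowLequivProdArrow,
      Equiv.sumArrowEquivProdArrow]
  rw [rank, rank, rank, hmulVecLin, LinearMap.range_comp, LinearMap.range_comp_of_range_eq_top _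
    (LinearEquiv.range _), LinearMap.range_prodMap, LinearEquiv.finrank_map_eq,
    Submodule.finrank_prod]

theorem rank_fromBlocks_one_zero [DecidableEq m] (B : Matrix l m K) (D : Matrix l o K) :
    (fromBlocks (1 : Matrix m m K) 0 B D).rank = Fintype.card m + D.rank := by
  classical
  have hclear : fromBlocks (1 : Matrix m m K) 0 (-B) (1 : Matrix l l K) *
      fromBlocks (1 : Matrix m m K) 0 B D = fromBlocks 1 0 0 D := by
    simp [fromBlocks_multiply]
  have hunit : IsUnit (fromBlocks (1 : Matrix m m K) 0 (-B) (1 : Matrix l l K)).det := by simp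
  rw [← rank_mul_eq_right_of_isUnit_det _ _ hunit, hclear, rank_fromBlocks_zero_zero, rank_one]

theorem rank_fromBlocks_zero_one [DecidableEq o] (A : Matrix m n K) (B : Matrix m o K) :
    (fromBlocks A B 0 (1 : Matrix o o K)).rank = A.rank + Fintype.card o := by
  rw [← rank_submatrix _ (Equiv.sumComm _ _) (Equiv.sumComm _ _), Equiv.sumComm_apply,
    Equiv.sumComm_apply, fromBlocks_submatrix_sum_swap_sum_swap, rank_fromBlocks_one_zero, add_comm]

omit [Fintype m] in
theorem rank_mul_eq_left_of_rank_eq_card (D : Matrix n o K) (hD : D.rank = Fintype.card n)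
    (M : Matrix m n K) : (M * D).rank = M.rank := by
  have htop : LinearMap.range D.mulVecLin = ⊤ :=
    Submodule.eq_top_of_finrank_eq (by rw [← rank, hD, Module.finrank_fintype_fun_eq_card])
  rw [rank, rank, mulVecLin_mul, LinearMap.range_comp_of_range_eq_top _ htop]

end Matrix

section DataMatrices

variable {K : Type*} [Field K] {ιu ιw ιx ιy τ : Type*} [Fintype ιu] [Fintype ιw] [Fintype ιx]
  [Fintype ιy] [Fintype τ] [DecidableEq ιu] [DecidableEq ιx]
  (A : Matrix ιx ιx K) (Bm : Matrix ιx ιu K) (Bp : Matrix ιx ιw K) (C : Matrix ιy ιx K)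
  {U : Matrix ιu τ K} {W : Matrix ιw τ K} {X : Matrix ιx τ K}

theorem rank_fromRows_input_outputDeriv_state
    (hD : (fromRows U (fromRows W X)).rank = Fintype.card (ιu ⊕ ιw ⊕ ιx)) :
    (fromRows U (fromRows (C * (A * X + Bm * U + Bp * W)) X)).rank =
      Fintype.card ιu + Fintype.card ιx + (C * Bp).rank := by
  have hfactor : fromRows U (fromRows (C * (A * X + Bm * U + Bp * W)) X) =
      fromBlocks 1 0 (fromRows (C * Bm) 0) (fromBlocks (C * Bp) (C * A) 0 1) *
        fromRows U (fromRows W X) := by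
    simp [fromBlocks_mul_fromRows, fromRows_add, Matrix.mul_add, Matrix.mul_assoc]
    congr 2
    abel
  rw [hfactor, rank_mul_eq_left_of_rank_eq_card _ hD, rank_fromBlocks_one_zero,
    rank_fromBlocks_zero_one]
  ring

theorem rank_fromRows_input_state_stateDeriv
    (hD : (fromRows U (fromRows W X)).rank = Fintype.card (ιu ⊕ ιw ⊕ ιx)) :
    (fromRows U (fromRows X (A * X + Bm * U + Bp * W))).rank =
      Fintype.card ιu + Fintype.card ιx + Bp.rank := by
  have hfactor : fromRows U (fromRows X (A * X + Bm * U + Bp * W)) =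
      fromBlocks 1 0 (fromRows 0 Bm) (fromBlocks 0 1 Bp A) * fromRows U (fromRows W X) := by
    simp [fromBlocks_mul_fromRows, fromRows_add]
    congr 2
    abel
  have hswap : (fromBlocks 0 (1 : Matrix ιx ιx K) Bp A).rank = Fintype.card ιx + Bp.rank := by
    rw [← rank_submatrix _ (Equiv.refl _) (Equiv.sumComm _ _), Equiv.sumComm_apply,
      Equiv.coe_refl, fromBlocks_submatrix_sum_swap_right, submatrix_id_id,
      rank_fromBlocks_one_zero]
  rw [hfactor, rank_mul_eq_left_of_rank_eq_card _ hD, rank_fromBlocks_one_zero, hswap]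
  ring

end DataMatrices

/-- Ranks of the stacked data matrices:
`rank [U; Ẏ; X] = m + n + rank (C Bᵖ)` and `rank [U; X; Ẋ] = m + n + rank Bᵖ`. -/
theorem stmt9 {n m r pdim N : ℕ}
    (A : Matrix (Fin n) (Fin n) ℝ)
    (Bm : Matrix (Fin n) (Fin m) ℝ) (Bp : Matrix (Fin n) (Fin r) ℝ)
    (C : Matrix (Fin pdim) (Fin n) ℝ)
    (U : Matrix (Fin m) (Fin N) ℝ) (W : Matrix (Fin r) (Fin N) ℝ)
    (X : Matrix (Fin n) (Fin N) ℝ)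
    (hrank : (Matrix.fromRows U (Matrix.fromRows W X)).rank = m + r + n)
    (Xdot : Matrix (Fin n) (Fin N) ℝ) (hXdot : Xdot = A * X + Bm * U + Bp * W)
    (Ydot : Matrix (Fin pdim) (Fin N) ℝ) (hYdot : Ydot = C * Xdot) :
    (Matrix.fromRows U (Matrix.fromRows Ydot X)).rank = m + n + (C * Bp).rank ∧
      (Matrix.fromRows U (Matrix.fromRows X Xdot)).rank = m + n + Bp.rank := by
  have hD : (fromRows U (fromRows W X)).rank = Fintype.card (Fin m ⊕ Fin r ⊕ Fin n) := by
    simp only [hrank, Fintype.card_sum, Fintype.card_fin, add_assoc]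
  subst hYdot hXdot
  have hY := rank_fromRows_input_outputDeriv_state A Bm Bp C hD
  have hX := rank_fromRows_input_state_stateDeriv A Bm Bp hD
  simp only [Fintype.card_fin] at hY hX
  exact ⟨hY, hX⟩
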